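/- Let A ⊆ ω^ω × ω^ω be analytic, represented by a tree T with (x,y) ∈ A iff T_{xy} ∉ WF, and define the rank δ(x) to be the least α with A_x = (A_α)_x (and ∞ if none exists), where A_α = {(x,y) : T_{xy} ∉ WF_α}. Then for any Borel set B ⊆ ω^ω, the set A ∩ (B × ω^ω) is Borel if and only if there exists α < ω₁ such that δ(x) < α for all x ∈ B. -/

import Mathlib

open MeasureTheory

/-- The "extension" relation of a tree `T ⊆ ω^{<ω}`: `s` is a proper extension
of `t` and `s ∈ T`.  `T` is well-founded (has no infinite branch) iff this
relation is well-founded. -/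
def branchRel (T : Set (List ℕ)) : List ℕ → List ℕ → Prop :=
  fun s t => t <+: s ∧ s ≠ t ∧ s ∈ T

/-- `T` is a well-founded tree (`T ∈ WF`). -/
def TreeWF (T : Set (List ℕ)) : Prop := WellFounded (branchRel T)

/-- The ordinal rank of a well-founded tree, computed at the empty sequence. -/
noncomputable def treeRank (T : Set (List ℕ)) (h : TreeWF T) : Ordinal :=
  (h.apply []).rank

/-- `T ∈ WF_α`: `T` is well-founded of rank at most `α`. -/
def TreeRankLE (T : Set (List ℕ)) (α : Ordinal) : Prop :=
  ∃ h : TreeWF T, treeRank T h ≤ α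

/-- The section tree `T_{xy} = {s : (x↾|s|, y↾|s|, s) ∈ T}` of a tree `T` on
`ω × ω × ω`. -/
def secTree (T : Set (List (ℕ × ℕ × ℕ))) (x y : ℕ → ℕ) : Set (List ℕ) :=
  {s | (List.ofFn fun i : Fin s.length => (x i.1, y i.1, s.get i)) ∈ T}

/-- The `α`-th approximation `A_α = {(x,y) : T_{xy} ∉ WF_α}` to the analytic set
represented by `T`. -/
def Aapprox (T : Set (List (ℕ × ℕ × ℕ))) (α : Ordinal) : Set ((ℕ → ℕ) × (ℕ → ℕ)) :=
  {p | ¬ TreeRankLE (secTree T p.1 p.2) α}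

/-!
For `α < ω₁` the set of `p` with `rank T_p ≤ α` is Borel, by induction on `α`: having rank
`≤ α` at a node means that each of its countably many children has rank `≤ β` for one of the
countably many `β < α`. So a bound `α` on the ranks over `B` exhibits `A ∩ (B × ω^ω)` as
`(B × ω^ω) ∩ A_α`.

Conversely, if `A ∩ (B × ω^ω)` is Borel, its complement `C` in `B × ω^ω` is analytic, the range
of a continuous `f` on the Baire space, and every `T_{f w}` is well-founded. These trees are
uniformly bounded in rank: all of them map, preserving the tree order, into the countable tree of
pairs `(u, s)` such that `s ∈ T_{f w}` for every `w` extending `u` (send `s ∈ T_{f z}` to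
`(z ↾ M |s|, s)`, where `M` is a modulus of continuity of `f` at `z`). An infinite branch of this
tree would give an infinite branch of `T_{f z}` for the limit `z` of the `u`'s, so it is
well-founded, of some countable rank `σ`, and then `A_x = (A_σ)_x` for every `x ∈ B`.
-/

open Filter Ordinal

universe u

theorem Ordinal.countable_Iio_of_lt_omega_one {o : Ordinal} (ho : o < ω₁) :
    (Set.Iio o).Countable := by
  rw [← Cardinal.le_aleph0_iff_set_countable, Cardinal.mk_Iio_ordinal, Cardinal.lift_le_aleph0,
    ← Cardinal.lt_aleph_one_iff, ← Cardinal.lt_omega_iff_card_lt]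
  exact ho

namespace Acc

variable {α β : Type u} {r : α → α → Prop}

theorem exists_rank_le_iff {a : α} {o : Ordinal} :
    (∃ h : Acc r a, h.rank ≤ o) ↔ ∀ b, r b a → ∃ h : Acc r b, h.rank < o := by
  constructor
  · rintro ⟨h, hle⟩ b hb
    exact ⟨h.inv hb, (h.rank_lt_of_rel hb).trans_le hle⟩
  · intro H
    refine ⟨⟨a, fun b hb => (H b hb).1⟩, ?_⟩
    rw [rank_eq]
    exact Ordinal.iSup_le fun ⟨b, hb⟩ => Order.succ_le_of_lt (H b hb).2

theorem rank_le_of_relHom {s : β → β → Prop} (f : r →r s) {a : α} (ha : Acc r a)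
    (hfa : Acc s (f a)) : ha.rank ≤ hfa.rank := by
  induction ha with
  | intro a _ ih =>
    rw [rank_eq]
    exact Ordinal.iSup_le fun ⟨b, hb⟩ => Order.succ_le_of_lt <|
      (ih b hb (hfa.inv (f.map_rel hb))).trans_lt (hfa.rank_lt_of_rel (f.map_rel hb))

theorem rank_lt_omega_one [Countable α] {a : α} (h : Acc r a) : h.rank < ω₁ := by
  induction h with
  | intro a _ ih =>
    rw [rank_eq]
    exact Ordinal.iSup_lt_omega_one fun b => (Cardinal.isSuccLimit_omega 1).succ_lt (ih b b.2)

end Acc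

theorem measurableSet_setOf_acc_rank_le {X : Type*} {ι : Type u} [MeasurableSpace X]
    [Countable ι] {r : X → ι → ι → Prop} (hr : ∀ a b, MeasurableSet {x | r x a b})
    {o : Ordinal.{u}} (ho : o < ω₁) (a : ι) :
    MeasurableSet {x | ∃ h : Acc (r x) a, h.rank ≤ o} := by
  induction o using WellFoundedLT.induction generalizing a with
  | _ o ih =>
    have : {x | ∃ h : Acc (r x) a, h.rank ≤ o} =
        ⋂ b, {x | r x b a}ᶜ ∪ ⋃ β ∈ Set.Iio o, {x | ∃ h : Acc (r x) b, h.rank ≤ β} := by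
      ext x
      simp only [Set.mem_iInter, Set.mem_union, Set.mem_compl_iff, Set.mem_iUnion, exists_prop,
        Set.mem_Iio, Set.mem_ofPred_eq]
      rw [Acc.exists_rank_le_iff]
      simp only [imp_iff_not_or]
      exact forall_congr' fun b => or_congr_right
        ⟨fun ⟨h, hlt⟩ => ⟨_, hlt, h, le_rfl⟩, fun ⟨_, hβ, h, hle⟩ => ⟨h, hle.trans_lt hβ⟩⟩
    rw [this]
    exact .iInter fun b => (hr b a).compl.union <| .biUnion (countable_Iio_of_lt_omega_one ho)
      fun β hβ => ih β hβ (lt_trans hβ ho) b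

theorem treeWF_of_acc_nil {U : Set (List ℕ)} (h : Acc (branchRel U) []) : TreeWF U := by
  refine ⟨fun t => .intro t fun s ⟨hpre, hne, hmem⟩ => h.inv ⟨List.nil_prefix, ?_, hmem⟩⟩
  rintro rfl
  exact hne (List.prefix_nil.mp hpre).symm

theorem treeRankLE_iff {U : Set (List ℕ)} {o : Ordinal} :
    TreeRankLE U o ↔ ∃ h : Acc (branchRel U) [], h.rank ≤ o :=
  ⟨fun ⟨h, hle⟩ => ⟨h.apply [], hle⟩, fun ⟨h, hle⟩ => ⟨treeWF_of_acc_nil h, hle⟩⟩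

theorem mem_secTree_congr {T : Set (List (ℕ × ℕ × ℕ))} {x y x' y' : ℕ → ℕ} {s : List ℕ}
    (h : ∀ i < s.length, (x i, y i) = (x' i, y' i)) :
    s ∈ secTree T x y ↔ s ∈ secTree T x' y' := by
  simp only [secTree, Set.mem_ofPred_eq]
  congr! 3 with i
  grind

theorem measurableSet_setOf_mem_secTree (T : Set (List (ℕ × ℕ × ℕ))) (s : List ℕ) :
    MeasurableSet {p : (ℕ → ℕ) × (ℕ → ℕ) | s ∈ secTree T p.1 p.2} := by
  let G : (ℕ → ℕ) × (ℕ → ℕ) → (Fin s.length → ℕ × ℕ) := fun p i => (p.1 i, p.2 i)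
  have hG : Measurable G := by fun_prop
  exact hG (Set.to_countable
    {g | (List.ofFn fun i => ((g i).1, (g i).2, s.get i)) ∈ T}).measurableSet

theorem measurableSet_Aapprox (T : Set (List (ℕ × ℕ × ℕ))) {α : Ordinal} (hα : α < ω₁) :
    MeasurableSet (Aapprox T α) := by
  have : Aapprox T α = {p | ∃ h : Acc (branchRel (secTree T p.1 p.2)) [], h.rank ≤ α}ᶜ := by
    ext p
    simp only [Aapprox, treeRankLE_iff, Set.mem_ofPred_eq, Set.mem_compl_iff]
  rw [this]
  refine (measurableSet_setOf_acc_rank_le (fun s t => ?_) hα []).compl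
  exact (MeasurableSet.const _).inter ((MeasurableSet.const _).inter
    (measurableSet_setOf_mem_secTree T s))

def listCylinder (u : List ℕ) : Set (ℕ → ℕ) := {w | ∀ i (hi : i < u.length), w i = u[i]}

theorem mem_listCylinder_map_range {z w : ℕ → ℕ} {m : ℕ} :
    w ∈ listCylinder ((List.range m).map z) ↔ w ∈ PiNat.cylinder z m := by
  simp [listCylinder, PiNat.mem_cylinder_iff]

theorem List.IsPrefix.length_lt_of_ne {α : Type*} {l₁ l₂ : List α} (h : l₁ <+: l₂)
    (hne : l₂ ≠ l₁) : l₁.length < l₂.length :=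
  h.length_le.lt_of_ne fun hl => hne (h.eq_of_length hl).symm

theorem exists_mem_listCylinder_of_chain {u : ℕ → List ℕ}
    (hu : ∀ n, u n <+: u (n + 1) ∧ u (n + 1) ≠ u n) : ∃ z, ∀ n, z ∈ listCylinder (u n) := by
  have hlen : ∀ n, n ≤ (u n).length := by
    intro n
    induction n with
    | zero => exact Nat.zero_le _
    | succ n ih => exact ih.trans_lt ((hu n).1.length_lt_of_ne (hu n).2)
  have hchain : ∀ {m n}, m ≤ n → u m <+: u n := by
    intro m n h
    induction n, h using Nat.le_induction with
    | base => exact List.prefix_refl _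
    | succ n _ ih => exact ih.trans (hu n).1
  refine ⟨fun i => (u (i + 1)).getD i 0, fun n i hi => ?_⟩
  have hi' : i < (u (i + 1)).length := (hlen (i + 1)).trans_lt' i.lt_succ_self
  change (u (i + 1)).getD i 0 = _
  rw [List.getD_eq_getElem _ _ hi']
  rcases le_total n (i + 1) with h | h
  · exact ((hchain h).getElem hi).symm
  · exact (hchain h).getElem hi'

def cylinderBranchRel (U : (ℕ → ℕ) → Set (List ℕ)) (q' q : List ℕ × List ℕ) : Prop :=
  q.1 <+: q'.1 ∧ q'.1 ≠ q.1 ∧ ∀ w ∈ listCylinder q'.1, branchRel (U w) q'.2 q.2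

theorem wellFounded_cylinderBranchRel {U : (ℕ → ℕ) → Set (List ℕ)} (hU : ∀ w, TreeWF (U w)) :
    WellFounded (cylinderBranchRel U) := by
  refine wellFounded_iff_isEmpty_descending_chain.2 ⟨fun ⟨q, hq⟩ => ?_⟩
  obtain ⟨z, hz⟩ := exists_mem_listCylinder_of_chain fun n => ⟨(hq n).1, (hq n).2.1⟩
  have : IsWellFounded _ (branchRel (U z)) := ⟨hU z⟩
  obtain ⟨n, hn⟩ := WellFounded.not_rel_apply_succ (r := branchRel (U z)) fun n => (q n).2
  exact hn ((hq n).2.2 z (hz (n + 1)))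

theorem cylinderBranchRel_map_range {U : (ℕ → ℕ) → Set (List ℕ)} {z : ℕ → ℕ} {M : ℕ → ℕ}
    (hM : StrictMono M)
    (hMU : ∀ n, ∀ w ∈ PiNat.cylinder z (M n), ∀ s : List ℕ, s.length = n → s ∈ U z → s ∈ U w)
    {a b : List ℕ} (hab : branchRel (U z) a b) :
    cylinderBranchRel U ((List.range (M a.length)).map z, a)
      ((List.range (M b.length)).map z, b) := by
  obtain ⟨hba, hne, ha⟩ := hab
  have hM' : M b.length < M a.length := hM (hba.length_lt_of_ne hne)
  refine ⟨?_, ?_, fun w hw => ⟨hba, hne, hMU _ w (mem_listCylinder_map_range.1 hw) a rfl ha⟩⟩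
  · rw [← Nat.min_eq_left hM'.le, ← List.take_range]
    exact (List.take_prefix _ _).map z
  · exact fun he => hM'.ne' (by simpa using congrArg List.length he)

theorem exists_treeRankLE_bound {U : (ℕ → ℕ) → Set (List ℕ)} (hWF : ∀ w, TreeWF (U w))
    (hU : ∀ z n, ∀ᶠ m in atTop, ∀ w ∈ PiNat.cylinder z m, ∀ s : List ℕ, s.length = n →
      s ∈ U z → s ∈ U w) :
    ∃ σ < ω₁, ∀ w, TreeRankLE (U w) σ := by
  have hwf := wellFounded_cylinderBranchRel hWF
  refine ⟨⨆ q, (hwf.apply q).rank,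
    Ordinal.iSup_lt_omega_one fun q => (hwf.apply q).rank_lt_omega_one, fun z => ⟨hWF z, ?_⟩⟩
  obtain ⟨M, hM, hMU⟩ := extraction_forall_of_eventually (hU z)
  let φ : branchRel (U z) →r cylinderBranchRel U :=
    ⟨fun s => ((List.range (M s.length)).map z, s), cylinderBranchRel_map_range hM hMU⟩
  exact ((hWF z).apply []).rank_le_of_relHom φ (hwf.apply _) |>.trans (Ordinal.le_iSup _ (φ []))

theorem eventually_forall_mem_cylinder_secTree {T : Set (List (ℕ × ℕ × ℕ))}
    {f : (ℕ → ℕ) → (ℕ → ℕ) × (ℕ → ℕ)} (hf : Continuous f) (z : ℕ → ℕ) (n : ℕ) :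
    ∀ᶠ m in atTop, ∀ w ∈ PiNat.cylinder z m, ∀ s : List ℕ, s.length = n →
      s ∈ secTree T (f z).1 (f z).2 → s ∈ secTree T (f w).1 (f w).2 := by
  let g : (ℕ → ℕ) → ℕ → ℕ × ℕ := fun w i => ((f w).1 i, (f w).2 i)
  have hg : Continuous g := by fun_prop
  obtain ⟨_, ⟨x, m, rfl⟩, hzx, hsub⟩ :=
    (PiNat.isTopologicalBasis_cylinders fun _ => ℕ).exists_subset_of_mem_open
      (show z ∈ g ⁻¹' PiNat.cylinder (g z) n from PiNat.self_mem_cylinder _ _)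
      ((PiNat.isOpen_cylinder _ (g z) n).preimage hg)
  rw [← PiNat.mem_cylinder_iff_eq.1 hzx] at hsub
  refine eventually_atTop.2 ⟨m, fun m' hm' w hw s hs => (mem_secTree_congr fun i hi => ?_).1⟩
  exact (PiNat.mem_cylinder_iff.1 (hsub (PiNat.cylinder_anti z hm' hw)) i (hs ▸ hi)).symm

theorem exists_treeRankLE_bound_of_analyticSet {T : Set (List (ℕ × ℕ × ℕ))}
    {S : Set ((ℕ → ℕ) × (ℕ → ℕ))} (hS : AnalyticSet S)
    (hWF : ∀ p ∈ S, TreeWF (secTree T p.1 p.2)) :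
    ∃ σ < ω₁, ∀ p ∈ S, TreeRankLE (secTree T p.1 p.2) σ := by
  rw [AnalyticSet] at hS
  rcases hS with rfl | ⟨f, hf, rfl⟩
  · exact ⟨0, omega_pos 1, by simp⟩
  · obtain ⟨σ, hσ, hbound⟩ := exists_treeRankLE_bound (fun w => hWF _ ⟨w, rfl⟩)
      (eventually_forall_mem_cylinder_secTree (T := T) hf)
    exact ⟨σ, hσ, Set.forall_mem_range.2 hbound⟩

theorem rectangular_borel_iff_rank_bounded_general
    (A : Set ((ℕ → ℕ) × (ℕ → ℕ))) (T : Set (List (ℕ × ℕ × ℕ)))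
    (hrep : ∀ p : (ℕ → ℕ) × (ℕ → ℕ), p ∈ A ↔ ¬ TreeWF (secTree T p.1 p.2))
    (B : Set (ℕ → ℕ)) (hB : MeasurableSet B) :
    MeasurableSet (A ∩ B ×ˢ (Set.univ : Set (ℕ → ℕ))) ↔
      ∃ α < (Cardinal.aleph 1).ord, ∀ x ∈ B, ∃ β < α,
        {y | (x, y) ∈ A} = {y | (x, y) ∈ Aapprox T β} := by
  have hsub : ∀ β, A ⊆ Aapprox T β := fun β p hp ⟨hwf, _⟩ => (hrep p).1 hp hwf
  rw [Cardinal.ord_aleph]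
  constructor
  · intro hm
    have hC : AnalyticSet (B ×ˢ Set.univ \ (A ∩ B ×ˢ Set.univ)) :=
      ((hB.prod .univ).diff hm).analyticSet
    obtain ⟨σ, hσ, hbound⟩ := exists_treeRankLE_bound_of_analyticSet (T := T) hC
      fun p hp => not_not.1 fun h => hp.2 ⟨(hrep p).2 h, hp.1⟩
    refine ⟨Order.succ σ, (Cardinal.isSuccLimit_omega 1).succ_lt hσ,
      fun x hx => ⟨σ, Order.lt_succ σ, Set.ext fun y => ⟨fun h => hsub σ h, fun h => ?_⟩⟩⟩
    by_contra hy
    exact h (hbound (x, y) ⟨⟨hx, trivial⟩, fun h' => hy h'.1⟩)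
  · rintro ⟨α, hα, hsec⟩
    have : A ∩ B ×ˢ Set.univ = B ×ˢ Set.univ ∩ Aapprox T α := by
      refine Set.ext fun ⟨x, y⟩ => ⟨fun ⟨hp, hx⟩ => ⟨hx, hsub α hp⟩, fun ⟨hx, hp⟩ => ⟨?_, hx⟩⟩
      obtain ⟨β, hβ, heq⟩ := hsec x hx.1
      change y ∈ {y | (x, y) ∈ A}
      rw [heq]
      exact fun ⟨hwf, hle⟩ => hp ⟨hwf, hle.trans hβ.le⟩
    rw [this]
    exact (hB.prod .univ).inter (measurableSet_Aapprox T hα)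

/-- with `A` analytic represented by the tree `T` and the rank
`δ(x)` = the least `α` with `A_x = (A_α)_x` (so `δ(x) < α` iff `A_x = (A_β)_x`
for some `β < α`), for a Borel `B ⊆ ω^ω` the set `A ∩ (B × ω^ω)` is Borel iff
there is `α < ω₁` with `δ(x) < α` for all `x ∈ B`. -/
theorem rectangular_borel_iff_rank_bounded
    (A : Set ((ℕ → ℕ) × (ℕ → ℕ))) (T : Set (List (ℕ × ℕ × ℕ)))
    (hA : AnalyticSet A)
    (hrep : ∀ p : (ℕ → ℕ) × (ℕ → ℕ), p ∈ A ↔ ¬ TreeWF (secTree T p.1 p.2))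
    (B : Set (ℕ → ℕ)) (hB : MeasurableSet B) :
    MeasurableSet (A ∩ B ×ˢ (Set.univ : Set (ℕ → ℕ))) ↔
      ∃ α < (Cardinal.aleph 1).ord, ∀ x ∈ B, ∃ β < α,
        {y | (x, y) ∈ A} = {y | (x, y) ∈ Aapprox T β} :=
  rectangular_borel_iff_rank_bounded_general A T hrep B hB
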